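/- arXiv:2406.12067 — 5 statements merged into one kernel-verified Lean document; each statement's English description precedes it below -/
import Mathlib

section
/- Let I : ℝ → ℝ be a continuous function and let U be its concave envelope, i.e., U(z) = inf{Φ(z) : Φ concave and Φ ≥ I}. Assume U takes finite values. If there is an open interval (a,b) ⊂ ℝ on which I < U, then U is affine on (a,b). -/
/-!
The pointwise infimum of concave majorants of `I` is itself a concave majorant, so `U` is concave
and lies below `U ⊓ Φ` for every concave `Φ` that dominates `I` wherever it does not dominate `U`.
Take `x < z` in `(a, b)` and let `g` be the chord of `U` over `[x, z]`. By concavity `g ≤ U` on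
`[x, z]` and `U ≤ g` outside it. If `t` is the maximum of `I - g` on `[x, z]`, then `g + max t 0`
dominates `I` on `[x, z]` and `U` outside, hence dominates `U`; at a maximiser of `I - g` this gives
`I < U ≤ g + max t 0`, which forces `t ≤ 0`, so `U ≤ g` and `U = g` on `[x, z]`. Chords over
nested intervals agree, so `U` is affine on `(a, b)`.
-/

open Set

section ChordOfConcave

variable {𝕜 : Type*} [Field 𝕜] [LinearOrder 𝕜] [IsStrictOrderedRing 𝕜] {s : Set 𝕜} {f : 𝕜 → 𝕜}
  {x z w : 𝕜}

theorem ConcaveOn.nonneg_of_mem_Icc (hf : ConcaveOn 𝕜 s f) (hx : x ∈ s) (hz : z ∈ s)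
    (hfx : f x = 0) (hfz : f z = 0) (hw : w ∈ Icc x z) : 0 ≤ f w := by
  simpa [hfx, hfz] using hf.ge_on_segment hx hz (by rwa [segment_eq_Icc (hw.1.trans hw.2)])

theorem ConcaveOn.nonpos_of_notMem_Ioo (hf : ConcaveOn 𝕜 s f) (hx : x ∈ s) (hz : z ∈ s)
    (hws : w ∈ s) (hxz : x < z) (hfx : f x = 0) (hfz : f z = 0) (hw : w ∉ Ioo x z) : f w ≤ 0 := by
  rcases le_or_gt w x with hwx | hxw
  · exact hfx ▸ hf.left_le_of_le_right'' hws hz hwx hxz (hfx.trans hfz.symm).le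
  · have hzw : z ≤ w := not_lt.1 fun hwz => hw ⟨hxw, hwz⟩
    exact hfz ▸ hf.right_le_of_le_left'' hx hws hxz hzw (hfz.trans hfx.symm).le

end ChordOfConcave

theorem concaveOn_affine (α β : ℝ) : ConcaveOn ℝ univ fun w => α * w + β :=
  ((LinearMap.mul ℝ ℝ α).concaveOn convex_univ).add_const β

theorem convexOn_affine (α β : ℝ) : ConvexOn ℝ univ fun w => α * w + β :=
  ((LinearMap.mul ℝ ℝ α).convexOn convex_univ).add_const β

def IsConcaveEnvelope {E : Type*} [AddCommGroup E] [Module ℝ E] (I U : E → ℝ) : Prop :=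
  ∀ z, IsGLB {y : ℝ | ∃ Φ : E → ℝ, ConcaveOn ℝ univ Φ ∧ (∀ x, I x ≤ Φ x) ∧ Φ z = y} (U z)

namespace IsConcaveEnvelope

variable {E : Type*} [AddCommGroup E] [Module ℝ E] {I U Φ : E → ℝ}

theorem le_of_majorant (hU : IsConcaveEnvelope I U) (hΦ : ConcaveOn ℝ univ Φ)
    (hIΦ : ∀ x, I x ≤ Φ x) : U ≤ Φ :=
  fun z => (hU z).1 ⟨Φ, hΦ, hIΦ, rfl⟩

theorem le (hU : IsConcaveEnvelope I U) : I ≤ U :=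
  fun z => (hU z).2 fun _ ⟨_, _, hIΦ, hΦz⟩ => hΦz ▸ hIΦ z

theorem concaveOn (hU : IsConcaveEnvelope I U) : ConcaveOn ℝ univ U := by
  refine ⟨convex_univ, fun p _ q _ s t hs ht hst => (hU _).2 ?_⟩
  rintro _ ⟨Φ, hΦ, hIΦ, rfl⟩
  calc s • U p + t • U q ≤ s • Φ p + t • Φ q := by
        gcongr <;> exact hU.le_of_majorant hΦ hIΦ _
    _ ≤ Φ (s • p + t • q) := hΦ.2 (mem_univ p) (mem_univ q) hs ht hst

theorem le_of_le_or_le (hU : IsConcaveEnvelope I U) (hΦ : ConcaveOn ℝ univ Φ)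
    (h : ∀ x, I x ≤ Φ x ∨ U x ≤ Φ x) : U ≤ Φ := by
  have hmajorant : ∀ x, I x ≤ (U ⊓ Φ) x := fun x =>
    le_inf (hU.le x) ((h x).elim id (hU.le x).trans)
  exact fun x => (hU.le_of_majorant (hU.concaveOn.inf hΦ) hmajorant x).trans inf_le_right

end IsConcaveEnvelope

theorem IsConcaveEnvelope.exists_affine_on_Icc {I U : ℝ → ℝ} (hU : IsConcaveEnvelope I U)
    {x z : ℝ} (hI : ContinuousOn I (Icc x z)) (hxz : x < z) (hlt : ∀ w ∈ Icc x z, I w < U w) :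
    ∃ α β : ℝ, ∀ w ∈ Icc x z, U w = α * w + β := by
  set α := (U z - U x) / (z - x)
  set β := U x - α * x
  set g : ℝ → ℝ := fun w => α * w + β
  have hgx : U x - g x = 0 := by simp only [g, β]; ring
  have hgz : U z - g z = 0 := by
    simp only [g, β, α]; field_simp [sub_ne_zero.2 hxz.ne']; ring
  have hconc : ConcaveOn ℝ univ (U - g) := hU.concaveOn.sub (convexOn_affine α β)
  have hg_le : ∀ w ∈ Icc x z, g w ≤ U w := fun w hw =>
    sub_nonneg.1 (hconc.nonneg_of_mem_Icc (mem_univ x) (mem_univ z) hgx hgz hw)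
  have hle_g : ∀ w ∉ Icc x z, U w ≤ g w := fun w hw =>
    sub_nonpos.1 (hconc.nonpos_of_notMem_Ioo (mem_univ x) (mem_univ z) (mem_univ w) hxz hgx hgz
      fun hw' => hw (Ioo_subset_Icc_self hw'))
  obtain ⟨m, hm, hmax⟩ := isCompact_Icc.exists_isMaxOn (nonempty_Icc.2 hxz.le)
    (hI.sub (by fun_prop : Continuous g).continuousOn)
  set t := I m - g m with ht_def
  have hU_le : ∀ w, U w ≤ g w + max t 0 := by
    refine hU.le_of_le_or_le ((concaveOn_affine α β).add_const (max t 0)) fun w => ?_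
    by_cases hw : w ∈ Icc x z
    · have hIg : I w - g w ≤ t := hmax hw
      left; linarith [le_max_left t 0]
    · right; linarith [hle_g w hw, le_max_right t 0]
  have ht : t ≤ 0 := by
    by_contra! ht
    linarith [hU_le m, max_eq_left ht.le, hlt m hm]
  refine ⟨α, β, fun w hw => le_antisymm ?_ (hg_le w hw)⟩
  linarith [hU_le w, max_eq_right ht]

theorem exists_affine_on_Ioo_of_forall_Icc {f : ℝ → ℝ} {a b : ℝ} (hab : a < b)
    (h : ∀ x z, a < x → x < z → z < b → ∃ α β : ℝ, ∀ w ∈ Icc x z, f w = α * w + β) :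
    ∃ α β : ℝ, ∀ w ∈ Ioo a b, f w = α * w + β := by
  obtain ⟨p, hap, hpb⟩ := exists_between hab
  obtain ⟨q, hpq, hqb⟩ := exists_between hpb
  refine ⟨(f q - f p) / (q - p), f p - (f q - f p) / (q - p) * p, fun w hw => ?_⟩
  obtain ⟨α, β, hαβ⟩ := h (min w p) (max w q) (lt_min hw.1 hap)
    ((min_le_right w p).trans_lt (hpq.trans_le (le_max_right w q))) (max_lt hw.2 hqb)
  have hpI : p ∈ Icc (min w p) (max w q) := ⟨min_le_right w p, hpq.le.trans (le_max_right w q)⟩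
  have hqI : q ∈ Icc (min w p) (max w q) := ⟨(min_le_right w p).trans hpq.le, le_max_right w q⟩
  have hwI : w ∈ Icc (min w p) (max w q) := ⟨min_le_left w p, le_max_left w q⟩
  rw [hαβ w hwI, hαβ p hpI, hαβ q hqI]
  field_simp [sub_ne_zero.2 hpq.ne']
  ring

/-- If a continuous function `I` is strictly below its (finite-valued) concave envelope `U`
on an open interval `(a,b)`, then `U` is affine on `(a,b)`. -/
theorem concave_envelope_affine_on_gap (I U : ℝ → ℝ) (hI : Continuous I)
    (hU : ∀ z, IsGLB {y : ℝ | ∃ Φ : ℝ → ℝ, ConcaveOn ℝ univ Φ ∧ (∀ x, I x ≤ Φ x) ∧ Φ z = y}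
      (U z))
    (a b : ℝ) (hab : a < b)
    (hlt : ∀ z ∈ Ioo a b, I z < U z) :
    ∃ α β : ℝ, ∀ z ∈ Ioo a b, U z = α * z + β :=
  exists_affine_on_Ioo_of_forall_Icc hab fun _ _ hax hxz hzb =>
    IsConcaveEnvelope.exists_affine_on_Icc hU hI.continuousOn hxz fun w hw =>
      hlt w ⟨hax.trans_le hw.1, hw.2.trans_lt hzb⟩
end

section
/- Let I : ℝ → ℝ be twice continuously differentiable and let U be its concave envelope, assumed finite valued. Suppose x₀ ∈ ℝ satisfies I(x₀) < U(x₀) < ∞, and there exists x̂ < x₀ with U(x̂) = I(x̂) and I < U on (x̂, x₀). Then U is differentiable at x̂ with U'(x̂) = I'(x̂), and I''(x̂) ≤ 0. -/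
/-!
The concave envelope `U` is concave and lies above `I`. At a contact point `xh`, the slopes of
`U` from `xh` to the right are bounded by the difference quotients of `I` from the left and vice
versa, so the tangent line of `I` at `xh` supports `U` from above. Squeezed between `I` and that
line, `U` is differentiable at `xh` with `U'(xh) = I'(xh)`. Moreover `I` lies below its own
tangent line, so `y ↦ I y - I'(xh) y` has a maximum at `xh`, which forces `I''(xh) ≤ 0`.
-/

open Set Filter Topology Asymptotics

section ConcaveEnvelope

variable {E : Type*} [AddCommGroup E] [Module ℝ E] {I U : E → ℝ}

def concaveMajorantValues (I : E → ℝ) (z : E) : Set ℝ :=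
  {y | ∃ Φ : E → ℝ, ConcaveOn ℝ univ Φ ∧ (∀ x, I x ≤ Φ x) ∧ Φ z = y}

lemma le_of_isGLB_concaveMajorantValues {z : E} (hU : IsGLB (concaveMajorantValues I z) (U z)) :
    I z ≤ U z :=
  hU.2 fun _ ⟨_, _, hΦI, hΦz⟩ => hΦz ▸ hΦI z

lemma concaveOn_of_isGLB_concaveMajorantValues
    (hU : ∀ z, IsGLB (concaveMajorantValues I z) (U z)) : ConcaveOn ℝ univ U := by
  refine ⟨convex_univ, fun x _ y _ a b ha hb hab => (hU (a • x + b • y)).2 ?_⟩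
  rintro _ ⟨Φ, hΦ, hΦI, rfl⟩
  have hΦx : U x ≤ Φ x := (hU x).1 ⟨Φ, hΦ, hΦI, rfl⟩
  have hΦy : U y ≤ Φ y := (hU y).1 ⟨Φ, hΦ, hΦI, rfl⟩
  calc a • U x + b • U y ≤ a • Φ x + b • Φ y := by gcongr
    _ ≤ Φ (a • x + b • y) := hΦ.2 (mem_univ x) (mem_univ y) ha hb hab

end ConcaveEnvelope

section Minorant

variable {f g : ℝ → ℝ} {x : ℝ}

lemma slope_le_slope_of_minorant_of_lt (hfg : ∀ y, f y ≤ g y) (hx : g x = f x) {z : ℝ}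
    (hz : z < x) : slope g x z ≤ slope f x z := by
  rw [slope_def_field, slope_def_field]
  exact div_le_div_of_nonpos_of_le (by linarith) (by linarith [hfg z])

lemma slope_le_slope_of_minorant_of_gt (hfg : ∀ y, f y ≤ g y) (hx : g x = f x) {y : ℝ}
    (hy : x < y) : slope f x y ≤ slope g x y := by
  rw [slope_def_field, slope_def_field]
  exact div_le_div_of_nonneg_right (by linarith [hfg y]) (by linarith)

namespace ConcaveOn

variable {d : ℝ}

lemma slope_le_of_minorant (hg : ConcaveOn ℝ univ g) (hfg : ∀ y, f y ≤ g y) (hx : g x = f x)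
    (hf : HasDerivAt f d x) {y : ℝ} (hy : x < y) : slope g x y ≤ d := by
  refine ge_of_tendsto ((hasDerivAt_iff_tendsto_slope.mp hf).mono_left (nhdsLT_le_nhdsNE x))
    (eventually_nhdsWithin_of_forall fun z (hz : z < x) => ?_)
  calc slope g x y ≤ slope g x z :=
        hg.slope_anti (mem_univ x) ⟨mem_univ z, hz.ne⟩ ⟨mem_univ y, hy.ne'⟩ (hz.trans hy).le
    _ ≤ slope f x z := slope_le_slope_of_minorant_of_lt hfg hx hz

lemma le_slope_of_minorant (hg : ConcaveOn ℝ univ g) (hfg : ∀ y, f y ≤ g y) (hx : g x = f x)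
    (hf : HasDerivAt f d x) {z : ℝ} (hz : z < x) : d ≤ slope g x z := by
  refine le_of_tendsto ((hasDerivAt_iff_tendsto_slope.mp hf).mono_left (nhdsGT_le_nhdsNE x))
    (eventually_nhdsWithin_of_forall fun y (hy : x < y) => ?_)
  calc slope f x y ≤ slope g x y := slope_le_slope_of_minorant_of_gt hfg hx hy
    _ ≤ slope g x z :=
        hg.slope_anti (mem_univ x) ⟨mem_univ z, hz.ne⟩ ⟨mem_univ y, hy.ne'⟩ (hz.trans hy).le

lemma le_tangent_of_minorant (hg : ConcaveOn ℝ univ g) (hfg : ∀ y, f y ≤ g y) (hx : g x = f x)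
    (hf : HasDerivAt f d x) (y : ℝ) : g y ≤ g x + d * (y - x) := by
  have hslope : slope g x y * (y - x) = g y - g x := by
    rcases eq_or_ne y x with rfl | hyx
    · simp
    · rw [slope_def_field, div_mul_cancel₀ _ (sub_ne_zero.mpr hyx)]
  rcases lt_trichotomy y x with hyx | rfl | hxy
  · nlinarith [hg.le_slope_of_minorant hfg hx hf hyx]
  · simp
  · nlinarith [hg.slope_le_of_minorant hfg hx hf hxy]

lemma hasDerivAt_of_minorant (hg : ConcaveOn ℝ univ g) (hfg : ∀ y, f y ≤ g y) (hx : g x = f x)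
    (hf : HasDerivAt f d x) : HasDerivAt g d x := by
  rw [hasDerivAt_iff_isLittleO]
  refine (isBigO_of_le _ fun y => ?_).trans_isLittleO (hasDerivAt_iff_isLittleO.mp hf)
  have htangent := hg.le_tangent_of_minorant hfg hx hf y
  simp only [smul_eq_mul, Real.norm_eq_abs]
  rw [abs_of_nonpos (by linarith), abs_of_nonpos (by linarith [hfg y])]
  linarith [hfg y]

end ConcaveOn

end Minorant

theorem IsLocalMax.deriv_deriv_nonpos {f : ℝ → ℝ} {x : ℝ} (h : IsLocalMax f x)
    (hc : ContinuousAt f x) : deriv (deriv f) x ≤ 0 := by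
  by_contra! hpos
  have hpos_right : ∀ᶠ y in 𝓝[>] x, 0 < deriv f y := by
    have hslope := hasDerivAt_iff_tendsto_slope.mp
      (differentiableAt_of_deriv_ne_zero hpos.ne').hasDerivAt
    filter_upwards [nhdsGT_le_nhdsNE x (hslope.eventually (eventually_gt_nhds hpos)),
      self_mem_nhdsWithin] with y hy (hxy : x < y)
    exact pos_of_slope_pos hxy hy h.deriv_eq_zero
  obtain ⟨u, hxu, hu⟩ := mem_nhdsGT_iff_exists_Ioo_subset.mp hpos_right
  have hmono : StrictMonoOn f (Ico x u) := by
    refine strictMonoOn_of_deriv_pos (convex_Ico x u) (fun y hy => ?_) fun y hy => ?_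
    · rcases hy.1.eq_or_lt with rfl | hxy
      · exact hc.continuousWithinAt
      · exact (differentiableAt_of_deriv_ne_zero (hu ⟨hxy, hy.2⟩).ne').continuousAt
          |>.continuousWithinAt
    · rw [interior_Ico] at hy
      exact hu hy
  obtain ⟨y, hy_le, hy⟩ := ((h.filter_mono nhdsWithin_le_nhds).and (Ioo_mem_nhdsGT hxu)).exists
  exact (hmono (left_mem_Ico.mpr hxu) (Ioo_subset_Ico_self hy) hy.1).not_ge hy_le

theorem deriv_deriv_nonpos_of_le_tangent {f : ℝ → ℝ} {x d : ℝ} (hf : Differentiable ℝ f)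
    (h : ∀ y, f y ≤ f x + d * (y - x)) : deriv (deriv f) x ≤ 0 := by
  set φ : ℝ → ℝ := fun y => f y - d * y
  have hφmax : IsLocalMax φ x := by
    refine IsMaxOn.isLocalMax (fun y _ => ?_) univ_mem
    change f y - d * y ≤ f x - d * x
    linarith [h y]
  have hφ' : deriv φ = fun y => deriv f y - d := by
    ext y
    have hφy := (hf y).hasDerivAt.sub ((hasDerivAt_id' y).const_mul d)
    rw [mul_one] at hφy
    exact hφy.deriv
  have hφ'' : deriv (deriv φ) x = deriv (deriv f) x := by rw [hφ', deriv_sub_const]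
  rw [← hφ'']
  exact hφmax.deriv_deriv_nonpos (hf.continuous.sub (by fun_prop)).continuousAt

theorem concave_envelope_contact_point_general (I U : ℝ → ℝ) (hI : ContDiff ℝ 2 I)
    (hU : ∀ z, IsGLB {y : ℝ | ∃ Φ : ℝ → ℝ, ConcaveOn ℝ univ Φ ∧ (∀ x, I x ≤ Φ x) ∧ Φ z = y}
      (U z))
    (xh : ℝ)
    (htouch : U xh = I xh) :
    HasDerivAt U (deriv I xh) xh ∧ deriv (deriv I) xh ≤ 0 := by
  have hIdiff : Differentiable ℝ I := hI.differentiable (by norm_num)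
  have hIU : ∀ z, I z ≤ U z := fun z => le_of_isGLB_concaveMajorantValues (hU z)
  have hUconc : ConcaveOn ℝ univ U := concaveOn_of_isGLB_concaveMajorantValues hU
  have hIxh : HasDerivAt I (deriv I xh) xh := (hIdiff xh).hasDerivAt
  refine ⟨hUconc.hasDerivAt_of_minorant hIU htouch hIxh,
    deriv_deriv_nonpos_of_le_tangent (d := deriv I xh) hIdiff fun y => ?_⟩
  calc I y ≤ U y := hIU y
    _ ≤ U xh + deriv I xh * (y - xh) := hUconc.le_tangent_of_minorant hIU htouch hIxh y
    _ = I xh + deriv I xh * (y - xh) := by rw [htouch]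

/-- At a left contact point `xh` of a `C²` function `I` with its concave envelope `U`,
adjacent to an interval where `I < U`, the envelope is differentiable with
`U'(xh) = I'(xh)` and `I''(xh) ≤ 0`. -/
theorem concave_envelope_contact_point (I U : ℝ → ℝ) (hI : ContDiff ℝ 2 I)
    (hU : ∀ z, IsGLB {y : ℝ | ∃ Φ : ℝ → ℝ, ConcaveOn ℝ univ Φ ∧ (∀ x, I x ≤ Φ x) ∧ Φ z = y}
      (U z))
    (x₀ xh : ℝ) (h0 : I x₀ < U x₀) (hx : xh < x₀)
    (htouch : U xh = I xh) (hlt : ∀ z ∈ Ioo xh x₀, I z < U z) :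
    HasDerivAt U (deriv I xh) xh ∧ deriv (deriv I) xh ≤ 0 :=
  concave_envelope_contact_point_general I U hI hU xh htouch
end

section
/- Let I_F : ℝ → ℝ be concave, C², nondecreasing with I_F'(x) ∈ [0,1], satisfying (σ²/2)I_F'' + (μ - F)I_F' - qI_F = -F on ℝ. Let ψ_q, φ solve the ODEs (L-q)u=0 and (L_F-q)u=0 as above, with b̂ the inflection point of ψ_q, φ strictly convex and decreasing. If I_F'(0) - I_F(0)φ'(0+) > 1, then the equation φ(b)/φ'(b) - ψ_q(b)/ψ_q'(b) = I_F'(b)·φ(b)/φ'(b) - I_F(b) has a solution b* in (0, b̂]. -/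
open Set Filter Topology

/-!
As `b → 0+`, `φ'(b) → φ'(0)` by convexity of `φ`, and `ψ(b)/ψ'(b) → 0` because concavity keeps
`ψ'` bounded away from zero near `0`; hence `g - h` tends to
`((1 - I_F'(0)) φ(0) + I_F(0) φ'(0)) / φ'(0)`, which is positive since `φ'(0) < 0` and
`I_F'(0) - I_F(0) φ'(0) > 1`. At `b̂` we have `ψ/ψ' = μ/q`, and the two ODEs with
`φ'' ≥ 0 ≥ I_F''` and `I_F' ≤ 1` give `g - h ≤ 0`. The intermediate value theorem concludes.
-/

lemma slope_midpoint_eq (f : ℝ → ℝ) (a b : ℝ) :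
    slope f ((a + b) / 2) b = 2 * slope f a b - slope f a ((a + b) / 2) := by
  simp only [slope_def_field]
  rw [show b - (a + b) / 2 = (b - a) / 2 by ring, show (a + b) / 2 - a = (b - a) / 2 by ring]
  generalize b - a = d
  ring

theorem ConvexOn.tendsto_deriv_nhdsGT {f : ℝ → ℝ} {a f' : ℝ} (hf : ConvexOn ℝ (Ioi a) f)
    (hfd : ∀ x ∈ Ioi a, DifferentiableAt ℝ f x) (ha : HasDerivWithinAt f f' (Ioi a) a) :
    Tendsto (deriv f) (𝓝[>] a) (𝓝 f') := by
  have hslope : Tendsto (slope f a) (𝓝[>] a) (𝓝 f') :=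
    (hasDerivWithinAt_iff_tendsto_slope' (lt_irrefl a)).mp ha
  -- `f'(x)` lies between the slopes over `[(a + x)/2, x]` and `[x, 2x - a]`, and by
  -- `slope_midpoint_eq` both are combinations of slopes from `a`.
  have hmid : Tendsto (fun x => (a + x) / 2) (𝓝[>] a) (𝓝[>] a) := by
    refine tendsto_nhdsWithin_of_tendsto_nhds_of_eventually_within _ ?_ ?_
    · exact (by fun_prop : Continuous fun x : ℝ => (a + x) / 2).tendsto' a a (by ring)
        |>.mono_left nhdsWithin_le_nhds
    · filter_upwards [self_mem_nhdsWithin] with x (hx : a < x)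
      exact show a < (a + x) / 2 by linarith
  have hreflect : Tendsto (fun x => 2 * x - a) (𝓝[>] a) (𝓝[>] a) := by
    refine tendsto_nhdsWithin_of_tendsto_nhds_of_eventually_within _ ?_ ?_
    · exact (by fun_prop : Continuous fun x : ℝ => 2 * x - a).tendsto' a a (by ring)
        |>.mono_left nhdsWithin_le_nhds
    · filter_upwards [self_mem_nhdsWithin] with x (hx : a < x)
      exact show a < 2 * x - a by linarith
  have hlower : Tendsto (fun x => 2 * slope f a x - slope f a ((a + x) / 2)) (𝓝[>] a) (𝓝 f') := by
    simpa [two_mul] using (hslope.const_mul 2).sub (hslope.comp hmid)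
  have hupper : Tendsto (fun x => 2 * slope f a (2 * x - a) - slope f a x) (𝓝[>] a) (𝓝 f') := by
    simpa [two_mul] using ((hslope.comp hreflect).const_mul 2).sub hslope
  refine tendsto_of_tendsto_of_tendsto_of_le_of_le' hlower hupper ?_ ?_
  all_goals filter_upwards [self_mem_nhdsWithin] with x (hx : a < x)
  · rw [← slope_midpoint_eq]
    exact hf.slope_le_deriv (by simp; linarith) hx (by linarith) (hfd x hx)
  · have h := slope_midpoint_eq f a (2 * x - a)
    rw [show (a + (2 * x - a)) / 2 = x by ring] at h
    rw [← h]
    exact hf.deriv_le_slope hx (show a < 2 * x - a by linarith) (by linarith) (hfd x hx)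

theorem ConcaveOn.eventually_lt_deriv_nhdsGT {f : ℝ → ℝ} {a b c r : ℝ}
    (hf : ConcaveOn ℝ (Ioo a b) f) (hfd : ∀ x ∈ Ioo a b, DifferentiableAt ℝ f x)
    (hfa : ContinuousWithinAt f (Ioi a) a) (hc : c ∈ Ioo a b) (hr : r < slope f a c) :
    ∀ᶠ x in 𝓝[>] a, r < deriv f x := by
  have hslope : Tendsto (fun x => slope f x c) (𝓝[>] a) (𝓝 (slope f a c)) := by
    simp only [slope_def_field]
    exact (tendsto_const_nhds.sub hfa).div
      (tendsto_const_nhds.sub (tendsto_id.mono_left nhdsWithin_le_nhds)) (sub_ne_zero.2 hc.1.ne')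
  filter_upwards [hslope.eventually (eventually_gt_nhds hr), Ioo_mem_nhdsGT hc.1]
    with x hrx hx
  exact hrx.trans_le <| hf.slope_le_deriv ⟨hx.1, hx.2.trans hc.2⟩ hc hx.2
    (hfd x ⟨hx.1, hx.2.trans hc.2⟩)

theorem ConcaveOn.tendsto_div_deriv_nhdsGT {f : ℝ → ℝ} {a b f' : ℝ}
    (hf : ConcaveOn ℝ (Ioo a b) f) (hfd : ∀ x ∈ Ioo a b, DifferentiableAt ℝ f x) (hab : a < b)
    (ha : HasDerivWithinAt f f' (Ioi a) a) (hf' : 0 < f') (hfa : f a = 0) :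
    Tendsto (fun x => f x / deriv f x) (𝓝[>] a) (𝓝 0) := by
  have hslope : Tendsto (slope f a) (𝓝[>] a) (𝓝 f') :=
    (hasDerivWithinAt_iff_tendsto_slope' (lt_irrefl a)).mp ha
  obtain ⟨c, hc_pos, hc⟩ : ∃ c, 0 < slope f a c ∧ c ∈ Ioo a b :=
    ((hslope.eventually (eventually_gt_nhds hf')).and (Ioo_mem_nhdsGT hab)).exists
  have hbound := hf.eventually_lt_deriv_nhdsGT hfd ha.continuousWithinAt hc (half_lt_self hc_pos)
  have hfa' : Tendsto f (𝓝[>] a) (𝓝 0) := hfa ▸ ha.continuousWithinAt.tendsto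
  refine squeeze_zero_norm' ?_ ((hfa'.norm.div_const (slope f a c / 2)).trans (by simp))
  filter_upwards [hbound] with x hx
  rw [norm_div, Real.norm_of_nonneg ((half_pos hc_pos).le.trans hx.le)]
  exact div_le_div_of_nonneg_left (norm_nonneg _) (half_pos hc_pos) hx.le

theorem ConvexOn.iteratedDeriv_two_nonneg {f : ℝ → ℝ} {s : Set ℝ} {x : ℝ} (hs : IsOpen s)
    (hf : ConvexOn ℝ s f) (hfd : ∀ y ∈ s, DifferentiableAt ℝ f y) (hx : x ∈ s) :
    0 ≤ iteratedDeriv 2 f x := by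
  rw [iteratedDeriv_succ, iteratedDeriv_one, ← derivWithin_of_isOpen hs hx]
  exact (hf.monotoneOn_deriv hfd).derivWithin_nonneg

theorem ConcaveOn.iteratedDeriv_two_nonpos {f : ℝ → ℝ} {s : Set ℝ} {x : ℝ} (hs : IsOpen s)
    (hf : ConcaveOn ℝ s f) (hfd : ∀ y ∈ s, DifferentiableAt ℝ f y) (hx : x ∈ s) :
    iteratedDeriv 2 f x ≤ 0 := by
  rw [iteratedDeriv_succ, iteratedDeriv_one, ← derivWithin_of_isOpen hs hx]
  exact (hf.antitoneOn_deriv hfd).derivWithin_nonpos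

theorem div_sub_div_sub_le_zero_of_ode {q s μ F p p' p'' i i' i'' : ℝ} (hq : 0 < q)
    (hs : 0 ≤ s) (hp' : p' < 0) (hp'' : 0 ≤ p'') (hi'' : i'' ≤ 0) (hi' : i' ≤ 1)
    (hp : s * p'' + (μ - F) * p' - q * p = 0) (hi : s * i'' + (μ - F) * i' - q * i = -F) :
    p / p' - μ / q - (i' * (p / p') - i) ≤ 0 := by
  have hpq : q * (p / p') ≤ μ - F := by
    rw [mul_div_assoc', div_le_iff_of_neg hp']
    nlinarith [mul_nonneg hs hp'']
  have hiq : q * i ≤ (μ - F) * i' + F := by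
    nlinarith [mul_nonpos_of_nonneg_of_nonpos hs hi'']
  have key : q * (p / p' - μ / q - (i' * (p / p') - i)) ≤ 0 := by
    have := mul_le_mul_of_nonneg_left hpq (sub_nonneg.2 hi')
    have hμ : q * (μ / q) = μ := mul_div_cancel₀ μ hq.ne'
    nlinarith
  exact nonpos_of_mul_nonpos_right key hq

/-- The paper's `g - h`. -/
noncomputable def smoothFitGap (ψ φ I : ℝ → ℝ) (b : ℝ) : ℝ :=
  φ b / deriv φ b - ψ b / deriv ψ b - (deriv I b * (φ b / deriv φ b) - I b)

theorem tendsto_smoothFitGap_nhdsGT {ψ φ I : ℝ → ℝ} {a A : ℝ}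
    (hψ : Tendsto (fun b => ψ b / deriv ψ b) (𝓝[>] a) (𝓝 0)) (hφ : ContinuousAt φ a)
    (hφ' : Tendsto (deriv φ) (𝓝[>] a) (𝓝 A)) (hA : A ≠ 0) (hI : ContinuousAt I a)
    (hI' : ContinuousAt (deriv I) a) :
    Tendsto (smoothFitGap ψ φ I) (𝓝[>] a) (𝓝 ((1 - deriv I a) * φ a / A + I a)) := by
  have hratio := (hφ.tendsto.mono_left nhdsWithin_le_nhds).div hφ' hA
  have h := (hratio.sub hψ).sub (((hI'.tendsto.mono_left nhdsWithin_le_nhds).mul hratio).sub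
    (hI.tendsto.mono_left nhdsWithin_le_nhds))
  rwa [show φ a / A - 0 - (deriv I a * (φ a / A) - I a) = (1 - deriv I a) * φ a / A + I a by
    ring] at h

theorem continuousOn_smoothFitGap {ψ φ I : ℝ → ℝ} {s : Set ℝ} (hs : IsOpen s)
    (hψ : ContDiffOn ℝ 1 ψ s) (hφ : ContDiffOn ℝ 1 φ s) (hI : ContDiff ℝ 1 I)
    (hψ' : ∀ x ∈ s, deriv ψ x ≠ 0) (hφ' : ∀ x ∈ s, deriv φ x ≠ 0) :
    ContinuousOn (smoothFitGap ψ φ I) s := by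
  have hratio : ContinuousOn (fun b => φ b / deriv φ b) s :=
    hφ.continuousOn.div (hφ.continuousOn_deriv_of_isOpen hs le_rfl) hφ'
  exact (hratio.sub (hψ.continuousOn.div (hψ.continuousOn_deriv_of_isOpen hs le_rfl) hψ')).sub
    (((hI.continuous_deriv le_rfl).continuousOn.mul hratio).sub hI.continuous.continuousOn)

theorem eventually_smoothFitGap_pos_nhdsGT_zero {ψ φ I : ℝ → ℝ} {b : ℝ} (hb : 0 < b)
    (hψ : ConcaveOn ℝ (Ioo 0 b) ψ) (hψd : ∀ x ∈ Ioo 0 b, DifferentiableAt ℝ ψ x) (hψ0 : ψ 0 = 0)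
    (hψ'0 : 0 < deriv ψ 0) (hφ : ConvexOn ℝ (Ioi 0) φ) (hφd : ∀ x ∈ Ioi 0, DifferentiableAt ℝ φ x)
    (hφ' : ∀ x ∈ Ioi 0, deriv φ x < 0) (hφ0 : φ 0 = 1) (hI : ContDiff ℝ 1 I)
    (hI'0 : deriv I 0 ≤ 1) (hcond : deriv I 0 - I 0 * deriv φ 0 > 1) :
    ∀ᶠ x in 𝓝[>] 0, 0 < smoothFitGap ψ φ I x := by
  have hA : deriv φ 0 ≠ 0 := fun h => by
    rw [h, mul_zero, sub_zero] at hcond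
    linarith
  have hφ0d := (differentiableAt_of_deriv_ne_zero hA).hasDerivAt
  have hφlim := hφ.tendsto_deriv_nhdsGT hφd hφ0d.hasDerivWithinAt
  have hAneg : deriv φ 0 < 0 :=
    (le_of_tendsto hφlim (eventually_nhdsWithin_of_forall fun x hx => (hφ' x hx).le)).lt_of_ne hA
  have hψlim := hψ.tendsto_div_deriv_nhdsGT hψd hb
    (differentiableAt_of_deriv_ne_zero hψ'0.ne').hasDerivAt.hasDerivWithinAt hψ'0 hψ0
  have hgap := tendsto_smoothFitGap_nhdsGT hψlim hφ0d.continuousAt hφlim hA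
    hI.continuous.continuousAt (hI.continuous_deriv le_rfl).continuousAt
  have hlim : 0 < (1 - deriv I 0) * φ 0 / deriv φ 0 + I 0 := by
    rw [hφ0, mul_one, div_add' _ _ _ hA]
    exact div_pos_of_neg_of_neg (by linarith) hAneg
  exact hgap.eventually (eventually_gt_nhds hlim)

theorem exists_optimal_barrier_general (q : ℝ) (hq : 0 < q) (μ F σ : ℝ → ℝ)
    (IF ψ φ : ℝ → ℝ)
    (hIFC : ContDiff ℝ 2 IF) (hIFconc : ConcaveOn ℝ univ IF)
    (hIF' : ∀ x, deriv IF x ∈ Icc (0:ℝ) 1)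
    (hIFode : ∀ x, σ x ^ 2 / 2 * iteratedDeriv 2 IF x
        + (μ x - F x) * deriv IF x - q * IF x = -F x)
    (hψC : ContDiffOn ℝ 2 ψ (Ioi 0))
    (hψ0 : ψ 0 = 0) (hψ'0 : deriv ψ 0 = 1) (hψ' : ∀ x > (0:ℝ), 0 < deriv ψ x)
    (bh : ℝ) (hbh : 0 < bh)
    (hconc : ConcaveOn ℝ (Ioo 0 bh) ψ)
    (hinfl : ψ bh / deriv ψ bh = μ bh / q)
    (hφC : ContDiffOn ℝ 2 φ (Ioi 0))
    (hφode : ∀ x > (0:ℝ),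
      σ x ^ 2 / 2 * iteratedDeriv 2 φ x + (μ x - F x) * deriv φ x - q * φ x = 0)
    (hφ0 : φ 0 = 1) (hφ' : ∀ x > (0:ℝ), deriv φ x < 0)
    (hφconv : StrictConvexOn ℝ (Ioi 0) φ)
    (hcond : deriv IF 0 - IF 0 * deriv φ 0 > 1) :
    ∃ b ∈ Ioc 0 bh,
      φ b / deriv φ b - ψ b / deriv ψ b = deriv IF b * (φ b / deriv φ b) - IF b := by
  have hψd : ∀ x ∈ Ioi (0:ℝ), DifferentiableAt ℝ ψ x := fun x hx =>
    (hψC.differentiableOn two_ne_zero).differentiableAt (isOpen_Ioi.mem_nhds hx)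
  have hφd : ∀ x ∈ Ioi (0:ℝ), DifferentiableAt ℝ φ x := fun x hx =>
    (hφC.differentiableOn two_ne_zero).differentiableAt (isOpen_Ioi.mem_nhds hx)
  have hnear := eventually_smoothFitGap_pos_nhdsGT_zero hbh hconc (fun x hx => hψd x hx.1) hψ0
    (hψ'0 ▸ one_pos) hφconv.convexOn hφd hφ' hφ0 (hIFC.of_le one_le_two) (hIF' 0).2 hcond
  obtain ⟨ε, hε, hεbh⟩ := (hnear.and (Ioo_mem_nhdsGT hbh)).exists
  have hbhgap : smoothFitGap ψ φ IF bh ≤ 0 := by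
    rw [smoothFitGap, hinfl]
    exact div_sub_div_sub_le_zero_of_ode hq (by positivity) (hφ' bh hbh)
      (hφconv.convexOn.iteratedDeriv_two_nonneg isOpen_Ioi hφd hbh)
      (hIFconc.iteratedDeriv_two_nonpos isOpen_univ
        (fun x _ => hIFC.differentiable two_ne_zero x) (mem_univ bh))
      (hIF' bh).2 (hφode bh hbh) (hIFode bh)
  have hcont := continuousOn_smoothFitGap isOpen_Ioi (hψC.of_le one_le_two) (hφC.of_le one_le_two)
    (hIFC.of_le one_le_two) (fun x hx => (hψ' x hx).ne') (fun x hx => (hφ' x hx).ne)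
  obtain ⟨b, hb, hb0⟩ := intermediate_value_Icc' hεbh.2.le
    (hcont.mono fun x hx => hεbh.1.trans_le hx.1) ⟨hbhgap, hε.le⟩
  exact ⟨b, ⟨hεbh.1.trans_le hb.1, hb.2⟩, sub_eq_zero.mp hb0⟩

/-- Existence of an optimal refraction level: if `I_F'(0) - I_F(0) φ'(0+) > 1`, the
smooth-fit equation `φ(b)/φ'(b) - ψ(b)/ψ'(b) = I_F'(b) φ(b)/φ'(b) - I_F(b)` has a
solution `b* ∈ (0, b̂]`. -/
theorem exists_optimal_barrier (q : ℝ) (hq : 0 < q) (μ F σ : ℝ → ℝ)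
    (hμ : ConcaveOn ℝ univ μ) (hμ0 : 0 < μ 0) (hμ' : deriv μ 0 < q)
    (hF : ConcaveOn ℝ univ F) (hFmono : Monotone F) (hF0 : 0 ≤ F 0)
    (hσpos : ∀ x, 0 < σ x)
    (IF ψ φ : ℝ → ℝ)
    (hIFC : ContDiff ℝ 2 IF) (hIFconc : ConcaveOn ℝ univ IF)
    (hIF' : ∀ x, deriv IF x ∈ Icc (0:ℝ) 1)
    (hIFode : ∀ x, σ x ^ 2 / 2 * iteratedDeriv 2 IF x
        + (μ x - F x) * deriv IF x - q * IF x = -F x)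
    (hψC : ContDiffOn ℝ 2 ψ (Ioi 0))
    (hψode : ∀ x > (0:ℝ),
      σ x ^ 2 / 2 * iteratedDeriv 2 ψ x + μ x * deriv ψ x - q * ψ x = 0)
    (hψ0 : ψ 0 = 0) (hψ'0 : deriv ψ 0 = 1) (hψ' : ∀ x > (0:ℝ), 0 < deriv ψ x)
    (bh : ℝ) (hbh : 0 < bh)
    (hconc : ConcaveOn ℝ (Ioo 0 bh) ψ) (hconv : ConvexOn ℝ (Ioi bh) ψ)
    (hinfl : ψ bh / deriv ψ bh = μ bh / q)
    (hφC : ContDiffOn ℝ 2 φ (Ioi 0))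
    (hφode : ∀ x > (0:ℝ),
      σ x ^ 2 / 2 * iteratedDeriv 2 φ x + (μ x - F x) * deriv φ x - q * φ x = 0)
    (hφ0 : φ 0 = 1) (hφpos : ∀ x ≥ (0:ℝ), 0 < φ x) (hφ' : ∀ x > (0:ℝ), deriv φ x < 0)
    (hφconv : StrictConvexOn ℝ (Ioi 0) φ)
    (hcond : deriv IF 0 - IF 0 * deriv φ 0 > 1) :
    ∃ b ∈ Ioc 0 bh,
      φ b / deriv φ b - ψ b / deriv ψ b = deriv IF b * (φ b / deriv φ b) - IF b :=
  exists_optimal_barrier_general q hq μ F σ IF ψ φ hIFC hIFconc hIF' hIFode hψC hψ0 hψ'0 hψ' bh hbh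
    hconc hinfl hφC hφode hφ0 hφ' hφconv hcond
end

section
/- Let q > 0, σ₀, σ₁ > 0, c₀, c₁ ∈ ℝ. Set Δ > 0 with Δ² = (σ₁² - 2c₁)² + 8qσ₁², a = (Δ - σ₁² + 2c₁)/(2σ₁²), b = 1 + Δ/σ₁², α = 2(c₀σ₁ - c₁σ₀)/σ₁², and z(x) = (σ₀+σ₁x)^{-1}. If y solves the confluent hypergeometric equation w·y''(w) + (b - w)y'(w) - a·y(w) = 0, then u(x) = z(x)^a · y(α·z(x)) solves (1/2)(σ₀+σ₁x)²u'' + (c₀+c₁x)u' - qu = 0 on x > 0. In particular, a is a root of σ₁²X² + (σ₁² - 2c₁)X - 2q = 0. -/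
/-!
Write `u = v ∘ φ` with `φ x = (σ₀ + σ₁ x)⁻¹` and `v z = z ^ a * y (α z)`. Since `φ' = -σ₁ φ²` and
`φ'' = 2 σ₁² φ³`, the chain rule turns `(σ₀ + σ₁ x)²/2 · u'' + (c₀ + c₁ x) u' - q u` into an
Euler-type operator in `z = φ x` applied to `v`. Conjugated by `z ^ a`, that operator becomes
`(σ₁²/2) α z` times the Kummer operator at `w = α z`, plus the constant `σ₁² a (a + 1)/2 - a c₁ - q`,
which vanishes because `a` is the root of `σ₁² X² + (σ₁² - 2c₁) X - 2q` selected by `Δ`.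
-/

open Real Finset

section PowMulComp

variable {a b α z : ℝ} {y : ℝ → ℝ}

theorem iteratedDeriv_rpow_const (k : ℕ) (a z : ℝ) :
    iteratedDeriv k (fun t : ℝ => t ^ a) z = (descPochhammer ℝ k).eval a * z ^ (a - k) := by
  rw [iteratedDeriv_eq_iterate, iter_deriv_rpow_const]

theorem iteratedDeriv_rpow_mul_comp_const_mul {k : ℕ} (hy : ContDiff ℝ k y) (hz : z ≠ 0) :
    iteratedDeriv k (fun t => t ^ a * y (α * t)) z =
      ∑ i ∈ range (k + 1), k.choose i * ((descPochhammer ℝ i).eval a * z ^ (a - i)) *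
        (α ^ (k - i) * iteratedDeriv (k - i) y (α * z)) := by
  rw [iteratedDeriv_fun_mul (f := fun t => t ^ a) (g := fun t => y (α * t))
    (contDiffAt_rpow_const_of_ne hz) (hy.comp (contDiff_const.mul contDiff_id)).contDiffAt]
  refine sum_congr rfl fun i _ => ?_
  rw [iteratedDeriv_rpow_const,
    iteratedDeriv_comp_const_mul (hy.of_le (by exact_mod_cast Nat.sub_le k i))]

/-- The Kummer equation for `y` at `α z`, conjugated by `z ^ a`. -/
theorem ode_rpow_mul_comp_const_mul_of_kummer (hy : ContDiff ℝ 2 y) (hz : z ≠ 0)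
    (hode : α * z * iteratedDeriv 2 y (α * z) + (b - α * z) * deriv y (α * z)
      - a * y (α * z) = 0) :
    z ^ 2 * iteratedDeriv 2 (fun t => t ^ a * y (α * t)) z
      + (b - 2 * a - α * z) * z * deriv (fun t => t ^ a * y (α * t)) z
      - a * (b - a - 1) * (z ^ a * y (α * z)) = 0 := by
  rw [← iteratedDeriv_one, iteratedDeriv_rpow_mul_comp_const_mul hy hz,
    iteratedDeriv_rpow_mul_comp_const_mul (hy.of_le one_le_two) hz]
  simp [sum_range_succ, descPochhammer_succ_right, rpow_sub_natCast hz]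
  field_simp at hode ⊢
  linear_combination α * z * z ^ a * hode

end PowMulComp

section InvAffine

variable {σ₀ σ₁ : ℝ}

theorem iteratedDeriv_inv_affine (k : ℕ) (σ₀ σ₁ x : ℝ) :
    iteratedDeriv k (fun x => (σ₀ + σ₁ * x)⁻¹) x
      = (-1) ^ k * k.factorial * σ₁ ^ k * ((σ₀ + σ₁ * x)⁻¹) ^ (k + 1) := by
  simp_rw [iteratedDeriv_eq_iterate, add_comm σ₀, iter_deriv_inv_linear]
  rw [show (-1 - k : ℤ) = -((k + 1 : ℕ) : ℤ) by push_cast; ring, zpow_neg, zpow_natCast, inv_pow]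

theorem deriv_inv_affine (σ₀ σ₁ x : ℝ) :
    deriv (fun x => (σ₀ + σ₁ * x)⁻¹) x = -σ₁ * ((σ₀ + σ₁ * x)⁻¹) ^ 2 := by
  rw [← iteratedDeriv_one, iteratedDeriv_inv_affine]
  ring

theorem iteratedDeriv_two_inv_affine (σ₀ σ₁ x : ℝ) :
    iteratedDeriv 2 (fun x => (σ₀ + σ₁ * x)⁻¹) x = 2 * σ₁ ^ 2 * ((σ₀ + σ₁ * x)⁻¹) ^ 3 := by
  rw [iteratedDeriv_inv_affine]
  norm_num

theorem affine_generator_comp_inv_affine {v : ℝ → ℝ} {c₀ c₁ x z : ℝ}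
    (hz : (σ₀ + σ₁ * x) * z = 1) (hv : ContDiffAt ℝ 2 v z) :
    (σ₀ + σ₁ * x) ^ 2 / 2 * iteratedDeriv 2 (fun x => v (σ₀ + σ₁ * x)⁻¹) x
      + (c₀ + c₁ * x) * deriv (fun x => v (σ₀ + σ₁ * x)⁻¹) x
      = σ₁ ^ 2 / 2 * z ^ 2 * iteratedDeriv 2 v z
        + (σ₁ ^ 2 - c₁ - (c₀ * σ₁ - c₁ * σ₀) * z) * z * deriv v z := by
  have hzinv : (σ₀ + σ₁ * x)⁻¹ = z := (eq_inv_of_mul_eq_one_right hz).symm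
  have hS : σ₀ + σ₁ * x ≠ 0 := left_ne_zero_of_mul_eq_one hz
  have hφ : ContDiffAt ℝ 2 (fun x => (σ₀ + σ₁ * x)⁻¹) x := by fun_prop (disch := exact hS)
  rw [← hzinv] at hv
  have h2 := iteratedDeriv_comp_two (g := v) (f := fun x => (σ₀ + σ₁ * x)⁻¹) hv hφ
  have h1 := deriv_comp (h₂ := v) (h := fun x => (σ₀ + σ₁ * x)⁻¹) x
    (hv.differentiableAt two_ne_zero) (hφ.differentiableAt two_ne_zero)
  simp only [Function.comp_def] at h1 h2
  rw [h1, h2, deriv_inv_affine, iteratedDeriv_two_inv_affine, hzinv]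
  linear_combination ((σ₀ + σ₁ * x) * z + 1) * σ₁ ^ 2 * z ^ 2 / 2 * iteratedDeriv 2 v z * hz
    + (σ₁ ^ 2 * ((σ₀ + σ₁ * x) * z + 1) - c₁) * z * deriv v z * hz

end InvAffine

theorem kummer_change_of_variables_affine_sigma_general
    (q σ₀ σ₁ c₀ c₁ Δ : ℝ) (hσ₀ : 0 < σ₀) (hσ₁ : 0 < σ₁)
    (hΔ : Δ ^ 2 = (σ₁ ^ 2 - 2 * c₁) ^ 2 + 8 * q * σ₁ ^ 2)
    (a b α : ℝ) (ha : a = (Δ - σ₁ ^ 2 + 2 * c₁) / (2 * σ₁ ^ 2))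
    (hb : b = 1 + Δ / σ₁ ^ 2) (hα : α = 2 * (c₀ * σ₁ - c₁ * σ₀) / σ₁ ^ 2)
    (y u : ℝ → ℝ) (hy : ContDiff ℝ 2 y)
    (hode : ∀ w, w * iteratedDeriv 2 y w + (b - w) * deriv y w - a * y w = 0)
    (hu : ∀ x, u x = ((σ₀ + σ₁ * x)⁻¹) ^ a * y (α * (σ₀ + σ₁ * x)⁻¹)) :
    (∀ x > (0:ℝ), (σ₀ + σ₁ * x) ^ 2 / 2 * iteratedDeriv 2 u x
        + (c₀ + c₁ * x) * deriv u x - q * u x = 0) ∧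
      σ₁ ^ 2 * a ^ 2 + (σ₁ ^ 2 - 2 * c₁) * a - 2 * q = 0 := by
  have hσ₁sq : σ₁ ^ 2 ≠ 0 := by positivity
  have hquad : σ₁ ^ 2 * a ^ 2 + (σ₁ ^ 2 - 2 * c₁) * a - 2 * q = 0 := by
    have hdiscrim : discrim (σ₁ ^ 2) (σ₁ ^ 2 - 2 * c₁) (-2 * q) = Δ * Δ := by
      rw [discrim, ← sq, hΔ]; ring
    have hroot := (quadratic_eq_zero_iff hσ₁sq hdiscrim a).2 (Or.inl (by rw [ha]; ring))
    linear_combination hroot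
  have hb' : σ₁ ^ 2 * (b - 2 * a) = 2 * (σ₁ ^ 2 - c₁) := by
    rw [hb, ha]; field_simp; ring
  have hα' : σ₁ ^ 2 * α = 2 * (c₀ * σ₁ - c₁ * σ₀) := by
    rw [hα]; field_simp
  refine ⟨fun x hx => ?_, hquad⟩
  have hS : 0 < σ₀ + σ₁ * x := by positivity
  set v : ℝ → ℝ := fun t => t ^ a * y (α * t)
  set z := (σ₀ + σ₁ * x)⁻¹
  have hz : 0 < z := inv_pos.2 hS
  have hv : ContDiffAt ℝ 2 v z :=
    (contDiffAt_rpow_const_of_ne hz.ne').mul (hy.comp (contDiff_const.mul contDiff_id)).contDiffAt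
  have hEK := ode_rpow_mul_comp_const_mul_of_kummer hy hz.ne' (hode (α * z))
  rw [show u = fun x => v (σ₀ + σ₁ * x)⁻¹ from funext hu,
    affine_generator_comp_inv_affine (mul_inv_cancel₀ hS.ne') hv]
  linear_combination σ₁ ^ 2 / 2 * hEK + z ^ 2 / 2 * deriv v z * hα'
    + (a * v z - z * deriv v z) / 2 * hb' + v z / 2 * hquad

/-- Change of variables for affine volatility: with
`Δ² = (σ₁² - 2c₁)² + 8qσ₁²`, `a = (Δ - σ₁² + 2c₁)/(2σ₁²)`, `b = 1 + Δ/σ₁²`,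
`α = 2(c₀σ₁ - c₁σ₀)/σ₁²`, `z = (σ₀+σ₁x)⁻¹`, if `y` solves the Kummer equation
`w y'' + (b - w) y' - a y = 0`, then `u(x) = z^a y(αz)` solves
`((σ₀+σ₁x)²/2) u'' + (c₀+c₁x) u' - q u = 0` on `x > 0`; moreover `a` is a root of
`σ₁² X² + (σ₁² - 2c₁) X - 2q = 0`. -/
theorem kummer_change_of_variables_affine_sigma
    (q σ₀ σ₁ c₀ c₁ Δ : ℝ) (hq : 0 < q) (hσ₀ : 0 < σ₀) (hσ₁ : 0 < σ₁)
    (hΔpos : 0 < Δ) (hΔ : Δ ^ 2 = (σ₁ ^ 2 - 2 * c₁) ^ 2 + 8 * q * σ₁ ^ 2)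
    (a b α : ℝ) (ha : a = (Δ - σ₁ ^ 2 + 2 * c₁) / (2 * σ₁ ^ 2))
    (hb : b = 1 + Δ / σ₁ ^ 2) (hα : α = 2 * (c₀ * σ₁ - c₁ * σ₀) / σ₁ ^ 2)
    (y u : ℝ → ℝ) (hy : ContDiff ℝ 2 y)
    (hode : ∀ w, w * iteratedDeriv 2 y w + (b - w) * deriv y w - a * y w = 0)
    (hu : ∀ x, u x = ((σ₀ + σ₁ * x)⁻¹) ^ a * y (α * (σ₀ + σ₁ * x)⁻¹)) :
    (∀ x > (0:ℝ), (σ₀ + σ₁ * x) ^ 2 / 2 * iteratedDeriv 2 u x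
        + (c₀ + c₁ * x) * deriv u x - q * u x = 0) ∧
      σ₁ ^ 2 * a ^ 2 + (σ₁ ^ 2 - 2 * c₁) * a - 2 * q = 0 :=
  kummer_change_of_variables_affine_sigma_general q σ₀ σ₁ c₀ c₁ Δ hσ₀ hσ₁ hΔ a b α ha hb hα y u hy
    hode hu
end

section
/- Let q > 0, σ₀, σ₁ > 0, c₀ ∈ ℝ, c₁ > 0. Set a = q/c₁, b = 1 + 2(c₁σ₀ - c₀σ₁)/σ₁², α = 2c₁/σ₁², z(x) = σ₀ + σ₁x. If y solves the confluent hypergeometric equation w·y'' + ((1+b) - w)y' - (1+a)y = 0, then u(x) = e^{-2c₁x/σ₁} · z(x)^b · y(α·z(x)) solves (1/2)(σ₀+σ₁x)u'' + (c₀+c₁x)u' - qu = 0 on x > 0. -/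
/-!
Writing `z = σ₀ + σ₁ x`, the hypothesis on `α` gives `e^{-2c₁x/σ₁} = e^{ασ₀} e^{-αz}`, so `u` is a
constant multiple of `v(z) = e^{-αz} z^b y(αz)`. The gauge factor `e^{-αz} z^b` turns Kummer's
equation for `y` into `z v'' + (αz + 1 - b) v' - αa v = 0`, and the affine substitution
`z = σ₀ + σ₁ x` turns this into the equation for `u`, because `(σ₁²/2)(αz + 1 - b) = σ₁(c₀ + c₁x)`
and `(σ₁²/2) α a = q`.
-/

open Topology

def HasSecondDerivAt (f f' f'' : ℝ → ℝ) (x : ℝ) : Prop :=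
  HasDerivAt f (f' x) x ∧ HasDerivAt f' (f'' x) x

namespace HasSecondDerivAt

variable {f f' f'' g g' g'' : ℝ → ℝ} {x : ℝ}

theorem mul (hf : HasSecondDerivAt f f' f'' x) (hg : HasSecondDerivAt g g' g'' x) :
    HasSecondDerivAt (fun t => f t * g t) (fun t => f' t * g t + f t * g' t)
      (fun t => f'' t * g t + 2 * (f' t * g' t) + f t * g'' t) x :=
  ⟨hf.1.mul hg.1, ((hf.2.mul hg.1).add (hf.1.mul hg.2)).congr_deriv (by ring)⟩

theorem const_mul (c : ℝ) (hf : HasSecondDerivAt f f' f'' x) :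
    HasSecondDerivAt (fun t => c * f t) (fun t => c * f' t) (fun t => c * f'' t) x :=
  ⟨hf.1.const_mul c, hf.2.const_mul c⟩

theorem comp_add_mul (k m : ℝ) (hf : HasSecondDerivAt f f' f'' (k + m * x)) :
    HasSecondDerivAt (fun t => f (k + m * t)) (fun t => m * f' (k + m * t))
      (fun t => m ^ 2 * f'' (k + m * t)) x := by
  have hlin : HasDerivAt (fun t => k + m * t) m x := by
    simpa using ((hasDerivAt_id x).const_mul m).const_add k
  refine ⟨(hf.1.comp x hlin).congr_deriv (mul_comm _ _), ?_⟩
  exact ((hf.2.comp x hlin).const_mul m).congr_deriv (by ring)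

theorem iteratedDeriv_two_eq (h : ∀ᶠ t in 𝓝 x, HasSecondDerivAt f f' f'' t) :
    iteratedDeriv 2 f x = f'' x := by
  have hderiv : deriv f =ᶠ[𝓝 x] f' := h.mono fun t ht => ht.1.deriv
  rw [iteratedDeriv_succ, iteratedDeriv_one, hderiv.deriv_eq]
  exact h.self_of_nhds.2.deriv

end HasSecondDerivAt

theorem ContDiff.hasSecondDerivAt {f : ℝ → ℝ} (hf : ContDiff ℝ 2 f) (x : ℝ) :
    HasSecondDerivAt f (deriv f) (iteratedDeriv 2 f) x := by
  refine ⟨(hf.differentiable two_ne_zero x).hasDerivAt, ?_⟩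
  rw [iteratedDeriv_succ]
  simpa only [iteratedDeriv_one] using
    (hf.differentiable_iteratedDeriv 1 (by norm_num) x).hasDerivAt

theorem hasSecondDerivAt_exp (x : ℝ) : HasSecondDerivAt Real.exp Real.exp Real.exp x :=
  ⟨Real.hasDerivAt_exp x, Real.hasDerivAt_exp x⟩

theorem hasSecondDerivAt_rpow_const {x : ℝ} (b : ℝ) (hx : x ≠ 0) :
    HasSecondDerivAt (fun t => t ^ b) (fun t => b * t ^ (b - 1))
      (fun t => b * (b - 1) * t ^ (b - 2)) x := by
  refine ⟨Real.hasDerivAt_rpow_const (Or.inl hx), ?_⟩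
  refine ((Real.hasDerivAt_rpow_const (p := b - 1) (Or.inl hx)).const_mul b).congr_deriv ?_
  rw [sub_sub, one_add_one_eq_two]
  ring

noncomputable section KummerTwist

variable (α b : ℝ) (y y' y'' : ℝ → ℝ)

def kummerTwist (t : ℝ) : ℝ := Real.exp (-α * t) * t ^ b * y (α * t)

def kummerTwistDeriv (t : ℝ) : ℝ :=
  Real.exp (-α * t) * ((b * t ^ (b - 1) - α * t ^ b) * y (α * t) + α * t ^ b * y' (α * t))

def kummerTwistDeriv2 (t : ℝ) : ℝ :=
  Real.exp (-α * t) * ((b * (b - 1) * t ^ (b - 2) - 2 * α * b * t ^ (b - 1) + α ^ 2 * t ^ b)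
      * y (α * t) + 2 * α * (b * t ^ (b - 1) - α * t ^ b) * y' (α * t)
    + α ^ 2 * t ^ b * y'' (α * t))

variable {α b y y' y''}

theorem hasSecondDerivAt_kummerTwist {t : ℝ} (ht : t ≠ 0)
    (hy : HasSecondDerivAt y y' y'' (α * t)) :
    HasSecondDerivAt (kummerTwist α b y) (kummerTwistDeriv α b y y')
      (kummerTwistDeriv2 α b y y' y'') t := by
  have hexp := (hasSecondDerivAt_exp (0 + -α * t)).comp_add_mul 0 (-α)
  have hy' := (zero_add (α * t) ▸ hy).comp_add_mul 0 α
  simp only [zero_add] at hexp hy'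
  have h := (hexp.mul (hasSecondDerivAt_rpow_const b ht)).mul hy'
  unfold kummerTwist kummerTwistDeriv kummerTwistDeriv2
  convert h using 1 <;> funext s <;> ring

theorem kummerTwist_ode {a z : ℝ} (hz : 0 < z)
    (hode : α * z * y'' (α * z) + (1 + b - α * z) * y' (α * z) - (1 + a) * y (α * z) = 0) :
    z * kummerTwistDeriv2 α b y y' y'' z + (α * z + 1 - b) * kummerTwistDeriv α b y y' z
      - α * a * kummerTwist α b y z = 0 := by
  unfold kummerTwist kummerTwistDeriv kummerTwistDeriv2
  generalize y (α * z) = Y, y' (α * z) = Y', y'' (α * z) = Y'', Real.exp (-α * z) = E at hode ⊢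
  rw [Real.rpow_sub hz, Real.rpow_sub hz, Real.rpow_one, Real.rpow_two]
  field_simp
  linear_combination E * z ^ b * z * α * hode

end KummerTwist

theorem kummer_change_of_variables_cir_general
    (q σ₀ σ₁ c₀ c₁ : ℝ) (hσ₀ : 0 < σ₀) (hσ₁ : 0 < σ₁) (hc₁ : 0 < c₁)
    (a b α : ℝ) (ha : a = q / c₁) (hb : b = 1 + 2 * (c₁ * σ₀ - c₀ * σ₁) / σ₁ ^ 2)
    (hα : α = 2 * c₁ / σ₁ ^ 2)
    (y u : ℝ → ℝ) (hy : ContDiff ℝ 2 y)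
    (hode : ∀ w, w * iteratedDeriv 2 y w + ((1 + b) - w) * deriv y w - (1 + a) * y w = 0)
    (hu : ∀ x, u x = Real.exp (-2 * c₁ * x / σ₁) * (σ₀ + σ₁ * x) ^ b
        * y (α * (σ₀ + σ₁ * x))) :
    ∀ x > (0:ℝ), (σ₀ + σ₁ * x) / 2 * iteratedDeriv 2 u x
      + (c₀ + c₁ * x) * deriv u x - q * u x = 0 := by
  intro x hx
  have hu_twist : u = fun t => Real.exp (α * σ₀) * kummerTwist α b y (σ₀ + σ₁ * t) := by
    have hexponent : ∀ t, -2 * c₁ * t / σ₁ = α * σ₀ + -α * (σ₀ + σ₁ * t) := fun t => by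
      rw [hα]
      field_simp
      ring
    funext t
    rw [hu, kummerTwist, hexponent, Real.exp_add]
    ring
  have hu_derivs : ∀ᶠ t in 𝓝 x, HasSecondDerivAt u
      (fun t => Real.exp (α * σ₀) * (σ₁ * kummerTwistDeriv α b y (deriv y) (σ₀ + σ₁ * t)))
      (fun t => Real.exp (α * σ₀) *
        (σ₁ ^ 2 * kummerTwistDeriv2 α b y (deriv y) (iteratedDeriv 2 y) (σ₀ + σ₁ * t))) t := by
    filter_upwards [Ioi_mem_nhds hx] with t (ht : 0 < t)
    rw [hu_twist]
    exact ((hasSecondDerivAt_kummerTwist (by positivity) (hy.hasSecondDerivAt _)).comp_add_mul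
      σ₀ σ₁).const_mul _
  have hz : 0 < σ₀ + σ₁ * x := by positivity
  have h_ode := kummerTwist_ode (α := α) (a := a) hz (hode _)
  have hdrift : σ₁ ^ 2 / 2 * (α * (σ₀ + σ₁ * x) + 1 - b) = σ₁ * (c₀ + c₁ * x) := by
    rw [hα, hb]
    field_simp
    ring
  have hrate : σ₁ ^ 2 / 2 * α * a = q := by
    rw [hα, ha]
    field_simp
  rw [HasSecondDerivAt.iteratedDeriv_two_eq hu_derivs, hu_derivs.self_of_nhds.1.deriv, hu_twist]
  linear_combination Real.exp (α * σ₀) * (σ₁ ^ 2 / 2 * h_ode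
    - kummerTwistDeriv α b y (deriv y) (σ₀ + σ₁ * x) * hdrift
    + kummerTwist α b y (σ₀ + σ₁ * x) * hrate)

/-- Change of variables for square-root volatility: with `a = q/c₁`,
`b = 1 + 2(c₁σ₀ - c₀σ₁)/σ₁²`, `α = 2c₁/σ₁²`, `z = σ₀ + σ₁x`, if `y` solves the Kummer
equation `w y'' + ((1+b) - w) y' - (1+a) y = 0`, then
`u(x) = e^{-2c₁x/σ₁} z^b y(αz)` solves `((σ₀+σ₁x)/2) u'' + (c₀+c₁x) u' - q u = 0` on
`x > 0`. -/
theorem kummer_change_of_variables_cir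
    (q σ₀ σ₁ c₀ c₁ : ℝ) (hq : 0 < q) (hσ₀ : 0 < σ₀) (hσ₁ : 0 < σ₁) (hc₁ : 0 < c₁)
    (a b α : ℝ) (ha : a = q / c₁) (hb : b = 1 + 2 * (c₁ * σ₀ - c₀ * σ₁) / σ₁ ^ 2)
    (hα : α = 2 * c₁ / σ₁ ^ 2)
    (y u : ℝ → ℝ) (hy : ContDiff ℝ 2 y)
    (hode : ∀ w, w * iteratedDeriv 2 y w + ((1 + b) - w) * deriv y w - (1 + a) * y w = 0)
    (hu : ∀ x, u x = Real.exp (-2 * c₁ * x / σ₁) * (σ₀ + σ₁ * x) ^ b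
        * y (α * (σ₀ + σ₁ * x))) :
    ∀ x > (0:ℝ), (σ₀ + σ₁ * x) / 2 * iteratedDeriv 2 u x
      + (c₀ + c₁ * x) * deriv u x - q * u x = 0 :=
  kummer_change_of_variables_cir_general q σ₀ σ₁ c₀ c₁ hσ₀ hσ₁ hc₁ a b α ha hb hα y u hy hode hu
end
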